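/- Three-term conservation law: under the hypotheses of a three-term cycle starting at q₁ ≠ 1, setting q_aux := (1 + q₁)/2 and a_aux := 1/(1 − q_aux), one has a₃₁ − a₂₃ + a₁₂ − a_aux = −1. -/

import Mathlib

noncomputable def mobiusL (a q : ℝ) : ℝ := (a * q + 1 - a) / ((1 + a) * q - a)

/-!
In the coordinate `x = 1 / (1 - q)` the Möbius map `ℓ(a)` becomes the affine reflection
`x ↦ 1 + a - x`. Around the cycle `q₁ → q₂ → q₃ → q₁` this gives `x₁ + x₂ = 1 + a₁₂`,
`x₂ + x₃ = 1 + a₂₃`, `x₃ + x₁ = 1 + a₃₁`, so the alternating sum `a₃₁ - a₂₃ + a₁₂` equals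
`2 x₁ - 1`, and `2 x₁` is exactly `1 / (1 - q_aux)`.
-/

section mobiusL

variable {a q : ℝ}

theorem one_sub_mobiusL (hd : (1 + a) * q - a ≠ 0) :
    1 - mobiusL a q = (q - 1) / ((1 + a) * q - a) := by
  rw [mobiusL, eq_div_iff hd, sub_mul, div_mul_cancel₀ _ hd]
  ring

theorem mobiusL_ne_one (hq : q ≠ 1) (hd : (1 + a) * q - a ≠ 0) : mobiusL a q ≠ 1 := by
  intro h
  have h' := one_sub_mobiusL hd
  rw [h, sub_self] at h'
  exact div_ne_zero (sub_ne_zero.mpr hq) hd h'.symm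

theorem inv_one_sub_mobiusL (hq : q ≠ 1) (hd : (1 + a) * q - a ≠ 0) :
    (1 - mobiusL a q)⁻¹ = 1 + a - (1 - q)⁻¹ := by
  have hq' : 1 - q ≠ 0 := sub_ne_zero.mpr hq.symm
  rw [one_sub_mobiusL hd, inv_div]
  field_simp
  ring

end mobiusL

theorem three_term_conservation (q1 q2 q3 a12 a23 a31 : ℝ)
    (hq1 : q1 ≠ 1)
    (hd12 : (1 + a12) * q1 - a12 ≠ 0)
    (hd23 : (1 + a23) * q2 - a23 ≠ 0)
    (hd31 : (1 + a31) * q3 - a31 ≠ 0)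
    (h12 : q2 = mobiusL a12 q1)
    (h23 : q3 = mobiusL a23 q2)
    (h31 : q1 = mobiusL a31 q3) :
    a31 - a23 + a12 - 1 / (1 - (1 + q1) / 2) = -1 := by
  have hq2 : q2 ≠ 1 := h12 ▸ mobiusL_ne_one hq1 hd12
  have hq3 : q3 ≠ 1 := h23 ▸ mobiusL_ne_one hq2 hd23
  have e12 := h12 ▸ inv_one_sub_mobiusL hq1 hd12
  have e23 := h23 ▸ inv_one_sub_mobiusL hq2 hd23
  have e31 := h31 ▸ inv_one_sub_mobiusL hq3 hd31
  have haux : 1 / (1 - (1 + q1) / 2) = 2 * (1 - q1)⁻¹ := by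
    rw [show 1 - (1 + q1) / 2 = (1 - q1) / 2 by ring, one_div_div, div_eq_mul_inv]
  linarith
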